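/- arXiv:math/0612699 — 3 statements merged into one kernel-verified Lean document; each statement's English description precedes it below -/
import Mathlib

section
/- Let p ≥ 1 and let F : ℝ → ℝ be measurable, locally integrable, and of bounded p-variation, i.e. V_p(F) < ∞. For ε > 0 define H_ε(x) := ε⁻¹ ∫_x^{x+ε} F(y) dy. Then H_ε has bounded p-variation with V_p(H_ε) ≤ V_p(F). -/
/-!
Write `H_ε(x) = ⨍_{t ∈ (0, ε]} F(x + t)`. For a partition `u`, the increment vector of `H_ε`
along `u` is then the average over `t` of the increment vectors of `F` along the shifted
partitions `u + t`. Each of these has `ℓ^p` norm at most `V_p(F)`, and the norm of an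
average is at most the average of the norms (Minkowski's integral inequality, `p ≥ 1`).
-/

open MeasureTheory Set
open scoped ENNReal

/-- The `p`-variation of a function `F : ℝ → ℝ`: the supremum over all finite increasing
sequences `x_0 < x_1 < ⋯ < x_n` of `(∑ |F(x_{i+1}) − F(x_i)|^p)^{1/p}`, valued in `ℝ≥0∞`. -/
noncomputable def pVar (p : ℝ) (F : ℝ → ℝ) : ℝ≥0∞ :=
  ⨆ (n : ℕ) (u : Fin (n + 1) → ℝ) (_ : StrictMono u),
    (∑ i : Fin n, ENNReal.ofReal |F (u i.succ) - F (u i.castSucc)| ^ p) ^ (1 / p)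

def increments {n : ℕ} (F : ℝ → ℝ) (u : Fin (n + 1) → ℝ) : Fin n → ℝ :=
  fun i => F (u i.succ) - F (u i.castSucc)

section Variation

variable {q : ℝ≥0∞} [Fact (1 ≤ q)]

theorem enorm_toLp_increments (hq : q ≠ ∞) {n : ℕ} (F : ℝ → ℝ) (u : Fin (n + 1) → ℝ) :
    ‖WithLp.toLp q (increments F u)‖ₑ =
      (∑ i : Fin n, ENNReal.ofReal |F (u i.succ) - F (u i.castSucc)| ^ q.toReal) ^
        (1 / q.toReal) := by
  have hq₀ : 0 < q.toReal :=
    ENNReal.toReal_pos (zero_lt_one.trans_le Fact.out).ne' hq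
  rw [← edist_zero_right, ← WithLp.toLp_zero, PiLp.edist_eq_sum hq₀]
  simp [increments, Real.enorm_eq_ofReal_abs]

theorem enorm_toLp_increments_le_pVar (hq : q ≠ ∞) (F : ℝ → ℝ) {n : ℕ} {u : Fin (n + 1) → ℝ}
    (hu : StrictMono u) : ‖WithLp.toLp q (increments F u)‖ₑ ≤ pVar q.toReal F := by
  rw [enorm_toLp_increments hq]
  exact le_iSup_of_le n <| le_iSup_of_le u <| le_iSup_of_le hu le_rfl

theorem pVar_le_of_forall_enorm_toLp_increments_le (hq : q ≠ ∞) {F : ℝ → ℝ} {C : ℝ≥0∞}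
    (h : ∀ (n : ℕ) (u : Fin (n + 1) → ℝ), StrictMono u → ‖WithLp.toLp q (increments F u)‖ₑ ≤ C) :
    pVar q.toReal F ≤ C :=
  iSup₂_le fun n u => iSup_le fun hu => enorm_toLp_increments hq F u ▸ h n u hu

end Variation

section Average

variable {α E : Type*} [MeasurableSpace α] {μ : Measure α}
  [NormedAddCommGroup E] [NormedSpace ℝ E]

theorem enorm_average_le {f : α → E} {C : ℝ≥0∞} (hf : ∀ x, ‖f x‖ₑ ≤ C) :
    ‖⨍ x, f x ∂μ‖ₑ ≤ C :=
  calc ‖⨍ x, f x ∂μ‖ₑ ≤ ⨍⁻ x, ‖f x‖ₑ ∂μ := enorm_integral_le_lintegral_enorm _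
    _ ≤ essSup (fun x => ‖f x‖ₑ) μ := laverage_le_essSup _
    _ ≤ C := essSup_le_of_ae_le C (ae_of_all _ hf)

theorem PiLp.toLp_average {ι : Type*} [Fintype ι] {β : ι → Type*}
    [∀ i, NormedAddCommGroup (β i)] [∀ i, NormedSpace ℝ (β i)] (q : ℝ≥0∞) [Fact (1 ≤ q)]
    (f : α → ∀ i, β i) : WithLp.toLp q (⨍ x, f x ∂μ) = ⨍ x, WithLp.toLp q (f x) ∂μ :=
  ((PiLp.continuousLinearEquiv q ℝ β).symm.integral_comp_comm f).symm

theorem increments_average {n : ℕ} (Φ : ℝ → α → ℝ) (hΦ : ∀ x, Integrable (Φ x) μ)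
    (u : Fin (n + 1) → ℝ) :
    increments (fun x => ⨍ t, Φ x t ∂μ) u = ⨍ t, increments (fun x => Φ x t) u ∂μ := by
  ext i
  have hint : ∀ j, Integrable (fun t => increments (fun x => Φ x t) u j) μ :=
    fun j => (hΦ _).sub (hΦ _)
  rw [average_eq, Pi.smul_apply, eval_integral hint, increments, average_eq, average_eq,
    ← smul_sub, ← integral_sub (hΦ _) (hΦ _)]
  rfl

end Average

theorem integrableOn_Ioc_comp_add_left {F : ℝ → ℝ} (hF : LocallyIntegrable F) (x ε : ℝ) :
    IntegrableOn (fun t => F (x + t)) (Ioc 0 ε) := by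
  have h := ((hF.integrableOn_isCompact isCompact_uIcc).intervalIntegrable
    (a := x) (b := x + ε)).comp_add_left x
  rw [sub_self, add_sub_cancel_left] at h
  exact h.1

theorem inv_mul_intervalIntegral_eq_setAverage_comp_add (F : ℝ → ℝ) (x : ℝ) {ε : ℝ} (hε : 0 < ε) :
    ε⁻¹ * ∫ y in x..(x + ε), F y = ⨍ t in Ioc 0 ε, F (x + t) := by
  rw [setAverage_eq, ← intervalIntegral.integral_of_le hε.le,
    intervalIntegral.integral_comp_add_left]
  simp [hε.le]

theorem pVar_averaged_le_general (p : ℝ) (hp : 1 ≤ p) (F : ℝ → ℝ)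
    (hFi : LocallyIntegrable F (volume : Measure ℝ))
    (ε : ℝ) (hε : 0 < ε) :
    pVar p (fun x => ε⁻¹ * ∫ y in x..(x + ε), F y) ≤ pVar p F := by
  have : Fact (1 ≤ ENNReal.ofReal p) := ⟨ENNReal.one_le_ofReal.mpr hp⟩
  have hq : ENNReal.ofReal p ≠ ∞ := ENNReal.ofReal_ne_top
  simp_rw [inv_mul_intervalIntegral_eq_setAverage_comp_add F _ hε]
  rw [← ENNReal.toReal_ofReal (zero_le_one.trans hp)]
  refine pVar_le_of_forall_enorm_toLp_increments_le hq fun n u hu => ?_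
  rw [increments_average _ (integrableOn_Ioc_comp_add_left hFi · ε), PiLp.toLp_average]
  exact enorm_average_le fun t =>
    enorm_toLp_increments_le_pVar (u := fun i => u i + t) hq F (hu.add_const t)

/-- For `p ≥ 1` and `F` measurable, locally integrable and of bounded
`p`-variation, the averaged function `H_ε(x) = ε⁻¹ ∫_x^{x+ε} F(y) dy` has bounded
`p`-variation with `V_p(H_ε) ≤ V_p(F)`. -/
theorem pVar_averaged_le (p : ℝ) (hp : 1 ≤ p) (F : ℝ → ℝ) (hFm : Measurable F)
    (hFi : LocallyIntegrable F (volume : Measure ℝ)) (hFv : pVar p F < ⊤)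
    (ε : ℝ) (hε : 0 < ε) :
    pVar p (fun x => ε⁻¹ * ∫ y in x..(x + ε), F y) ≤ pVar p F :=
  pVar_averaged_le_general p hp F hFi ε hε
end

section
/- Let t > 0, γ ≥ 1, and let F : [0,t] × ℝ → ℝ be such that for every s ∈ [0,t] the function F(s,·) is measurable and locally integrable, and F has bounded γ-variation in x uniformly in s, i.e. M := sup_{s ∈ [0,t]} V_γ(F(s,·)) < ∞. For ε > 0 define H_ε(s,x) := ε⁻¹ ∫_x^{x+ε} F(s,y) dy. Then for every s ∈ [0,t], V_γ(H_ε(s,·)) ≤ V_γ(F(s,·)); in particular sup_{s ∈ [0,t]} V_γ(H_ε(s,·)) ≤ M, so H_ε also has bounded γ-variation in x uniformly in s. -/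
/-!
The average `H_ε(x) = ε⁻¹ ∫_x^{x+ε} F` is the mixture `∫ F(x + y) dμ(y)` of translates of `F`
against the uniform probability measure `μ` on `(0, ε]`. Each increment of `H_ε` is then bounded
by the `μ`-average of the corresponding increments of `F(· + y)`, and Jensen's inequality for
`r ↦ r ^ γ` moves the `γ`-th power inside that average. Summing over a partition and exchanging sum
and integral leaves the `μ`-average of the `γ`-variation sums of `F` along the shifted partitions
`x_i + y`, each at most `V_γ(F) ^ γ`.
-/

open MeasureTheory Filter Set
open scoped ENNReal

open ProbabilityTheory

theorem rpow_lintegral_le_lintegral_rpow {α : Type*} [MeasurableSpace α] {μ : Measure α}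
    [IsProbabilityMeasure μ] {p : ℝ} (hp : 1 ≤ p) {f : α → ℝ≥0∞} (hf : AEMeasurable f μ) :
    (∫⁻ a, f a ∂μ) ^ p ≤ ∫⁻ a, f a ^ p ∂μ := by
  have hp₀ : 0 < p := one_pos.trans_le hp
  have h := eLpNorm'_le_eLpNorm'_of_exponent_le one_pos hp μ hf.aestronglyMeasurable
  simp only [eLpNorm', enorm_eq_self, ENNReal.rpow_one, div_one, one_div] at h
  rwa [← ENNReal.le_rpow_inv_iff hp₀]

theorem pVar_le_iff {p : ℝ} (hp : 0 < p) {G : ℝ → ℝ} {C : ℝ≥0∞} :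
    pVar p G ≤ C ↔ ∀ (n : ℕ) (u : Fin (n + 1) → ℝ), StrictMono u →
      ∑ i : Fin n, ENNReal.ofReal |G (u i.succ) - G (u i.castSucc)| ^ p ≤ C ^ p := by
  simp only [pVar, iSup_le_iff, one_div, ENNReal.rpow_inv_le_iff hp]

theorem sum_rpow_le_pVar_rpow {p : ℝ} (hp : 0 < p) (G : ℝ → ℝ) {n : ℕ} {u : Fin (n + 1) → ℝ}
    (hu : StrictMono u) :
    ∑ i : Fin n, ENNReal.ofReal |G (u i.succ) - G (u i.castSucc)| ^ p ≤ pVar p G ^ p :=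
  (pVar_le_iff hp).1 le_rfl n u hu

theorem pVar_integral_comp_add_le {μ : Measure ℝ} [IsProbabilityMeasure μ] {p : ℝ} (hp : 1 ≤ p)
    {G : ℝ → ℝ} (hG : ∀ x, Integrable (fun y => G (x + y)) μ) :
    pVar p (fun x => ∫ y, G (x + y) ∂μ) ≤ pVar p G := by
  have hp₀ : 0 < p := one_pos.trans_le hp
  have hinc : ∀ a b, ENNReal.ofReal |∫ y, G (b + y) ∂μ - ∫ y, G (a + y) ∂μ|
      ≤ ∫⁻ y, ENNReal.ofReal |G (b + y) - G (a + y)| ∂μ := fun a b => by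
    simpa only [← integral_sub (hG b) (hG a), Real.enorm_eq_ofReal_abs]
      using enorm_integral_le_lintegral_enorm (fun y => G (b + y) - G (a + y))
  have hmeas : ∀ a b, AEMeasurable (fun y => ENNReal.ofReal |G (b + y) - G (a + y)|) μ :=
    fun a b => ((hG b).sub (hG a)).aemeasurable.abs.ennreal_ofReal
  rw [pVar_le_iff hp₀]
  intro n u hu
  calc ∑ i : Fin n, ENNReal.ofReal |∫ y, G (u i.succ + y) ∂μ - ∫ y, G (u i.castSucc + y) ∂μ| ^ p
      ≤ ∑ i : Fin n, (∫⁻ y, ENNReal.ofReal |G (u i.succ + y) - G (u i.castSucc + y)| ∂μ) ^ p := by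
        gcongr with i
        exact hinc _ _
    _ ≤ ∑ i : Fin n, ∫⁻ y, ENNReal.ofReal |G (u i.succ + y) - G (u i.castSucc + y)| ^ p ∂μ := by
        gcongr with i
        exact rpow_lintegral_le_lintegral_rpow hp (hmeas _ _)
    _ = ∫⁻ y, ∑ i : Fin n, ENNReal.ofReal |G (u i.succ + y) - G (u i.castSucc + y)| ^ p ∂μ :=
        (lintegral_finsetSum' _ fun i _ => (hmeas _ _).pow_const p).symm
    _ ≤ pVar p G ^ p :=
        lintegral_le_const (ae_of_all _ fun y => sum_rpow_le_pVar_rpow hp₀ G (hu.add_const y))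

theorem inv_mul_intervalIntegral_eq_integral_cond (f : ℝ → ℝ) {ε : ℝ} (hε : 0 ≤ ε) (x : ℝ) :
    ε⁻¹ * ∫ y in x..x + ε, f y = ∫ y, f (x + y) ∂(volume[|Ioc 0 ε]) := by
  calc ε⁻¹ * ∫ y in x..x + ε, f y = (ε - 0)⁻¹ • ∫ y in 0..ε, f (x + y) := by
        simp [intervalIntegral.integral_comp_add_left]
    _ = ⨍ y in Ioc 0 ε, f (x + y) := by rw [← interval_average_eq, uIoc_of_le hε]
    _ = ∫ y, f (x + y) ∂(volume[|Ioc 0 ε]) := setAverage_eq' _ _ _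

theorem integrable_comp_add_cond {f : ℝ → ℝ} (hf : LocallyIntegrable f volume) {ε : ℝ}
    (hε : 0 < ε) (x : ℝ) : Integrable (fun y => f (x + y)) (volume[|Ioc 0 ε]) := by
  have hint : IntervalIntegrable f volume x (x + ε) :=
    (hf.integrableOn_isCompact isCompact_uIcc).intervalIntegrable
  have hshift := (hint.comp_add_left x).1
  simp only [sub_self, add_sub_cancel_left] at hshift
  exact hshift.smul_measure (by simp [hε])

theorem pVar_intervalAverage_le {p : ℝ} (hp : 1 ≤ p) {f : ℝ → ℝ} (hf : LocallyIntegrable f volume)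
    {ε : ℝ} (hε : 0 < ε) :
    pVar p (fun x => ε⁻¹ * ∫ y in x..x + ε, f y) ≤ pVar p f := by
  have : IsProbabilityMeasure (volume[|Ioc (0 : ℝ) ε]) :=
    cond_isProbabilityMeasure_of_finite (by simp [hε]) (by simp)
  simp only [inv_mul_intervalIntegral_eq_integral_cond f hε.le]
  exact pVar_integral_comp_add_le hp (integrable_comp_add_cond hf hε)

theorem pVar_averaged_le_uniform_general (t γ : ℝ) (hγ : 1 ≤ γ)
    (F : ℝ → ℝ → ℝ)
    (hFi : ∀ s ∈ Set.Icc (0 : ℝ) t, LocallyIntegrable (F s) (volume : Measure ℝ))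
    (ε : ℝ) (hε : 0 < ε) :
    (∀ s ∈ Set.Icc (0 : ℝ) t,
        pVar γ (fun x => ε⁻¹ * ∫ y in x..(x + ε), F s y) ≤ pVar γ (F s)) ∧
    (⨆ s : Set.Icc (0 : ℝ) t, pVar γ (fun x => ε⁻¹ * ∫ y in x..(x + ε), F s y)) ≤
      ⨆ s : Set.Icc (0 : ℝ) t, pVar γ (F s) := by
  have hvar : ∀ s ∈ Set.Icc (0 : ℝ) t,
      pVar γ (fun x => ε⁻¹ * ∫ y in x..(x + ε), F s y) ≤ pVar γ (F s) :=
    fun s hs => pVar_intervalAverage_le hγ (hFi s hs) hε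
  exact ⟨hvar, iSup_mono fun s => hvar s s.2⟩

/-- Let `F(s,·)` be measurable, locally integrable, and of bounded
`γ`-variation in `x` uniformly in `s ∈ [0,t]`, i.e. `M := sup_{s ∈ [0,t]} V_γ(F(s,·)) < ∞`.
Then the spatial averages `H_ε(s,x) = ε⁻¹ ∫_x^{x+ε} F(s,y) dy` satisfy
`V_γ(H_ε(s,·)) ≤ V_γ(F(s,·))` for every `s ∈ [0,t]`; in particular
`sup_{s ∈ [0,t]} V_γ(H_ε(s,·)) ≤ M`, so `H_ε` also has bounded `γ`-variation in `x`
uniformly in `s`. -/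
theorem pVar_averaged_le_uniform (t γ : ℝ) (ht : 0 < t) (hγ : 1 ≤ γ)
    (F : ℝ → ℝ → ℝ)
    (hFm : ∀ s ∈ Set.Icc (0 : ℝ) t, Measurable (F s))
    (hFi : ∀ s ∈ Set.Icc (0 : ℝ) t, LocallyIntegrable (F s) (volume : Measure ℝ))
    (hM : (⨆ s : Set.Icc (0 : ℝ) t, pVar γ (F s)) < ⊤)
    (ε : ℝ) (hε : 0 < ε) :
    (∀ s ∈ Set.Icc (0 : ℝ) t,
        pVar γ (fun x => ε⁻¹ * ∫ y in x..(x + ε), F s y) ≤ pVar γ (F s)) ∧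
    (⨆ s : Set.Icc (0 : ℝ) t, pVar γ (fun x => ε⁻¹ * ∫ y in x..(x + ε), F s y)) ≤
      ⨆ s : Set.Icc (0 : ℝ) t, pVar γ (F s) :=
  pVar_averaged_le_uniform_general t γ hγ F hFi ε hε
end

section
/- Let t > 0, p ≥ 1, q ≥ 1, and let F : [0,t] × ℝ → ℝ be such that F(s,·) is measurable and locally integrable for each s ∈ [0,t], and F has finite two-parameter (p,q)-variation V_{p,q}(F) := sup over all finite grids s_0 < s_1 < ⋯ < s_m in [0,t] and x_0 < x_1 < ⋯ < x_n in ℝ of (∑_{i=0}^{m−1} (∑_{j=0}^{n−1} |Δ_{ij} F|^p)^{q/p})^{1/q}, where Δ_{ij} F := F(s_{i+1}, x_{j+1}) − F(s_{i+1}, x_j) − F(s_i, x_{j+1}) + F(s_i, x_j). For ε > 0 define H_ε(s,x) := ε⁻¹ ∫_x^{x+ε} F(s,y) dy. Then H_ε has finite two-parameter (p,q)-variation with V_{p,q}(H_ε) ≤ V_{p,q}(F). -/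
open MeasureTheory Filter Set
open scoped ENNReal

/-- The two-parameter `(p,q)`-variation of `G : [0,t] × ℝ → ℝ`: the supremum over all
finite grids `s_0 < ⋯ < s_m` in `[0,t]` and `x_0 < ⋯ < x_n` in `ℝ` of
`(∑_i (∑_j |Δ_{ij} G|^p)^{q/p})^{1/q}`, where
`Δ_{ij} G = G(s_{i+1},x_{j+1}) − G(s_{i+1},x_j) − G(s_i,x_{j+1}) + G(s_i,x_j)` is the
rectangular increment; valued in `ℝ≥0∞`. -/
noncomputable def pqVar (p q t : ℝ) (G : ℝ → ℝ → ℝ) : ℝ≥0∞ :=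
  ⨆ (m : ℕ) (n : ℕ) (s : Fin (m + 1) → ℝ) (x : Fin (n + 1) → ℝ)
    (_ : StrictMono s) (_ : ∀ i, s i ∈ Set.Icc 0 t) (_ : StrictMono x),
    (∑ i : Fin m,
        (∑ j : Fin n,
            ENNReal.ofReal
              |G (s i.succ) (x j.succ) - G (s i.succ) (x j.castSucc) -
                G (s i.castSucc) (x j.succ) + G (s i.castSucc) (x j.castSucc)| ^ p) ^
          (q / p)) ^ (1 / q)

/-!
On a fixed grid, the matrix of rectangular increments of `H_ε` is the average over
`u ∈ (0, ε]` of the increment matrices of `F` on the grid shifted by `u`. For `p, q ≥ 1` the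
mixed norm `(∑_i (∑_j |A_ij|^p)^{q/p})^{1/q}` is the norm of the normed space `ℓ^q(ℓ^p)`, so the
norm of this (Bochner) average is at most the supremum of the norms of the shifted increment
matrices, each of which is bounded by `V_{p,q}(F)`.
-/

theorem intervalIntegral.eval_integral {ι : Type*} [Fintype ι] {E : ι → Type*}
    [∀ i, NormedAddCommGroup (E i)] [∀ i, NormedSpace ℝ (E i)] [∀ i, CompleteSpace (E i)]
    {f : ℝ → ∀ i, E i} {μ : Measure ℝ} {a b : ℝ}
    (hf : ∀ i, IntervalIntegrable (fun x => f x i) μ a b) (i : ι) :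
    (∫ x in a..b, f x ∂μ) i = ∫ x in a..b, f x i ∂μ := by
  simp only [intervalIntegral, Pi.sub_apply, MeasureTheory.eval_integral (fun i => (hf i).1),
    MeasureTheory.eval_integral (fun i => (hf i).2)]

theorem ContinuousLinearEquiv.intervalIntegral_comp_comm {E F : Type*} [NormedAddCommGroup E]
    [NormedSpace ℝ E] [NormedAddCommGroup F] [NormedSpace ℝ F] (L : E ≃L[ℝ] F) (f : ℝ → E)
    {μ : Measure ℝ} {a b : ℝ} : ∫ x in a..b, L (f x) ∂μ = L (∫ x in a..b, f x ∂μ) := by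
  simp only [intervalIntegral, L.integral_comp_comm, map_sub]

theorem enorm_inv_smul_intervalIntegral_le {E : Type*} [NormedAddCommGroup E] [NormedSpace ℝ E]
    {f : ℝ → E} {ε : ℝ} (hε : 0 < ε) {C : ℝ≥0∞} (hC : ∀ u ∈ Ioc 0 ε, ‖f u‖ₑ ≤ C) :
    ‖ε⁻¹ • ∫ u in 0..ε, f u‖ₑ ≤ C := by
  calc ‖ε⁻¹ • ∫ u in 0..ε, f u‖ₑ
      = (ENNReal.ofReal ε)⁻¹ * ‖∫ u in Ioc 0 ε, f u‖ₑ := by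
        rw [enorm_smul, intervalIntegral.integral_of_le hε.le,
          Real.enorm_eq_ofReal (inv_pos.2 hε).le, ENNReal.ofReal_inv_of_pos hε]
    _ ≤ (ENNReal.ofReal ε)⁻¹ * ∫⁻ u in Ioc 0 ε, C := by
        gcongr
        exact (enorm_integral_le_lintegral_enorm f).trans (setLIntegral_mono_ae' measurableSet_Ioc
          (ae_of_all _ hC))
    _ = C := by
        rw [setLIntegral_const, Real.volume_Ioc, sub_zero, mul_comm C, ← mul_assoc,
          ENNReal.inv_mul_cancel (by simpa using hε) ENNReal.ofReal_ne_top, one_mul]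

section Grid

variable {m n : ℕ}

def rectIncr (G : ℝ → ℝ → ℝ) (s : Fin (m + 1) → ℝ) (x : Fin (n + 1) → ℝ) :
    Fin m → Fin n → ℝ := fun i j =>
  G (s i.succ) (x j.succ) - G (s i.succ) (x j.castSucc) -
    G (s i.castSucc) (x j.succ) + G (s i.castSucc) (x j.castSucc)

noncomputable def mixedNorm (p q : ℝ) (A : Fin m → Fin n → ℝ) : ℝ≥0∞ :=
  (∑ i, (∑ j, ENNReal.ofReal |A i j| ^ p) ^ (q / p)) ^ (1 / q)

theorem le_pqVar {p q t : ℝ} (G : ℝ → ℝ → ℝ) {s : Fin (m + 1) → ℝ} {x : Fin (n + 1) → ℝ}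
    (hs : StrictMono s) (hst : ∀ i, s i ∈ Icc 0 t) (hx : StrictMono x) :
    mixedNorm p q (rectIncr G s x) ≤ pqVar p q t G :=
  le_iSup_of_le m <| le_iSup_of_le n <| le_iSup_of_le s <| le_iSup_of_le x <|
    le_iSup_of_le hs <| le_iSup_of_le hst <| le_iSup_of_le hx le_rfl

theorem pqVar_le {p q t : ℝ} {G : ℝ → ℝ → ℝ} {C : ℝ≥0∞}
    (h : ∀ (m n : ℕ) (s : Fin (m + 1) → ℝ) (x : Fin (n + 1) → ℝ), StrictMono s →
      (∀ i, s i ∈ Icc 0 t) → StrictMono x → mixedNorm p q (rectIncr G s x) ≤ C) :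
    pqVar p q t G ≤ C :=
  iSup_le fun m => iSup_le fun n => iSup_le fun s => iSup_le fun x =>
    iSup_le fun hs => iSup_le fun hst => iSup_le fun hx => h m n s x hs hst hx

abbrev MixedLp (p q : ℝ≥0∞) (m n : ℕ) : Type :=
  PiLp q fun _ : Fin m => PiLp p fun _ : Fin n => ℝ

noncomputable def toMixedLp (p q : ℝ≥0∞) : (Fin m → Fin n → ℝ) ≃L[ℝ] MixedLp p q m n :=
  (ContinuousLinearEquiv.piCongrRight fun _ => (PiLp.continuousLinearEquiv p ℝ _).symm).trans
    (PiLp.continuousLinearEquiv q ℝ _).symm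

theorem ofReal_norm_toMixedLp {p q : ℝ} (hp : 0 < p) (hq : 0 < q) (A : Fin m → Fin n → ℝ) :
    ENNReal.ofReal ‖toMixedLp (.ofReal p) (.ofReal q) A‖ = mixedNorm p q A := by
  have hrow : ∀ i, ‖toMixedLp (.ofReal p) (.ofReal q) A i‖ = (∑ j, |A i j| ^ p) ^ (1 / p) := by
    intro i
    rw [PiLp.norm_eq_sum (by rwa [ENNReal.toReal_ofReal hp.le]), ENNReal.toReal_ofReal hp.le]
    simp [toMixedLp, Real.norm_eq_abs]
  have hrow_nonneg : ∀ i, 0 ≤ ∑ j, |A i j| ^ p := fun i => by positivity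
  rw [PiLp.norm_eq_sum (by rwa [ENNReal.toReal_ofReal hq.le]), ENNReal.toReal_ofReal hq.le]
  simp_rw [hrow, ← Real.rpow_mul (hrow_nonneg _), one_div_mul_eq_div]
  rw [mixedNorm, ← ENNReal.ofReal_rpow_of_nonneg (by positivity) (by positivity),
    ENNReal.ofReal_sum_of_nonneg fun i _ => by positivity]
  congr 1
  refine Finset.sum_congr rfl fun i _ => ?_
  rw [← ENNReal.ofReal_rpow_of_nonneg (hrow_nonneg i) (by positivity),
    ENNReal.ofReal_sum_of_nonneg fun j _ => by positivity]
  simp_rw [ENNReal.ofReal_rpow_of_nonneg (abs_nonneg _) hp.le]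

theorem rectIncr_average {F : ℝ → ℝ → ℝ} {s : Fin (m + 1) → ℝ} (x : Fin (n + 1) → ℝ)
    (hF : ∀ a, LocallyIntegrable (F (s a))) (ε : ℝ) :
    rectIncr (fun s x => ε⁻¹ * ∫ y in x..(x + ε), F s y) s x =
      ε⁻¹ • ∫ u in 0..ε, rectIncr F s (fun j => x j + u) := by
  have hshift : ∀ a c, IntervalIntegrable (fun u => F (s a) (c + u)) volume 0 ε := fun a c => by
    simpa using (((hF a).integrableOn_isCompact isCompact_uIcc).intervalIntegrable
      (a := c) (b := c + ε)).comp_add_left c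
  have hrow : ∀ i j, IntervalIntegrable (fun u => rectIncr F s (fun j => x j + u) i j) volume 0 ε :=
    fun i j => (((hshift _ _).sub (hshift _ _)).sub (hshift _ _)).add (hshift _ _)
  have hcol : ∀ i, IntervalIntegrable (fun u => rectIncr F s (fun j => x j + u) i) volume 0 ε :=
    fun i => ⟨Integrable.of_eval fun j => (hrow i j).1, Integrable.of_eval fun j => (hrow i j).2⟩
  ext i j
  rw [Pi.smul_apply, Pi.smul_apply, intervalIntegral.eval_integral hcol,
    intervalIntegral.eval_integral (hrow i)]
  simp only [rectIncr]
  rw [intervalIntegral.integral_add (((hshift _ _).sub (hshift _ _)).sub (hshift _ _)) (hshift _ _),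
    intervalIntegral.integral_sub ((hshift _ _).sub (hshift _ _)) (hshift _ _),
    intervalIntegral.integral_sub (hshift _ _) (hshift _ _)]
  simp only [intervalIntegral.integral_comp_add_left, add_zero, smul_eq_mul]
  ring

end Grid

theorem pqVar_averaged_le_general (t p q : ℝ) (hp : 1 ≤ p) (hq : 1 ≤ q)
    (F : ℝ → ℝ → ℝ)
    (hFi : ∀ s ∈ Set.Icc (0 : ℝ) t, LocallyIntegrable (F s) (volume : Measure ℝ))
    (ε : ℝ) (hε : 0 < ε) :
    pqVar p q t (fun s x => ε⁻¹ * ∫ y in x..(x + ε), F s y) ≤ pqVar p q t F := by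
  have : Fact (1 ≤ ENNReal.ofReal p) := ⟨ENNReal.one_le_ofReal.2 hp⟩
  have : Fact (1 ≤ ENNReal.ofReal q) := ⟨ENNReal.one_le_ofReal.2 hq⟩
  have enorm_toMixedLp {m n : ℕ} (A : Fin m → Fin n → ℝ) :
      ‖toMixedLp (.ofReal p) (.ofReal q) A‖ₑ = mixedNorm p q A := by
    rw [← ofReal_norm, ofReal_norm_toMixedLp (by linarith) (by linarith)]
  refine pqVar_le fun m n s x hs hst hx => ?_
  calc mixedNorm p q (rectIncr _ s x)
      = ‖ε⁻¹ • ∫ u in 0..ε, toMixedLp (.ofReal p) (.ofReal q) (rectIncr F s (x · + u))‖ₑ := by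
        rw [← enorm_toMixedLp, rectIncr_average x (fun a => hFi _ (hst a)), map_smul,
          ContinuousLinearEquiv.intervalIntegral_comp_comm]
    _ ≤ pqVar p q t F := enorm_inv_smul_intervalIntegral_le hε fun u _ => by
        rw [enorm_toMixedLp]
        exact le_pqVar F hs hst (hx.add_const u)

/-- If `F(s,·)` is measurable and locally integrable for each
`s ∈ [0,t]` and `F` has finite two-parameter `(p,q)`-variation, then the spatial average
`H_ε(s,x) = ε⁻¹ ∫_x^{x+ε} F(s,y) dy` has finite `(p,q)`-variation with
`V_{p,q}(H_ε) ≤ V_{p,q}(F)`. -/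
theorem pqVar_averaged_le (t p q : ℝ) (ht : 0 < t) (hp : 1 ≤ p) (hq : 1 ≤ q)
    (F : ℝ → ℝ → ℝ)
    (hFm : ∀ s ∈ Set.Icc (0 : ℝ) t, Measurable (F s))
    (hFi : ∀ s ∈ Set.Icc (0 : ℝ) t, LocallyIntegrable (F s) (volume : Measure ℝ))
    (hFv : pqVar p q t F < ⊤)
    (ε : ℝ) (hε : 0 < ε) :
    pqVar p q t (fun s x => ε⁻¹ * ∫ y in x..(x + ε), F s y) ≤ pqVar p q t F :=
  pqVar_averaged_le_general t p q hp hq F hFi ε hε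
end
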